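/- (Personalized PageRank can be solved via the generalized Bellman–Ford algorithm.) Define P : Matrix V V ℝ≥0∞ by P x y := α * w x y / (∑_{y' : V} w x y'), and let H_t be the generalized Bellman–Ford iterates for the matrix P. Then for all vertices u, v : V, ⨆_{t : ℕ} (H_t u v) = (if u = v then 1 else 0) + ∑'_{t : ℕ} ((P^(t+1)) u v). -/

import Mathlib

open ENNReal

/-- The generalized Bellman–Ford iterates for a weight matrix `A`:
`H 0 = 1` (identity matrix) and `H (t+1) = H t * A + 1`. -/
noncomputable def bellmanFord {V : Type*} [Fintype V] [DecidableEq V]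
    (A : Matrix V V ℝ≥0∞) : ℕ → Matrix V V ℝ≥0∞
  | 0 => 1
  | t + 1 => bellmanFord A t * A + 1

/-- The damped random-walk matrix of personalized PageRank:
`P x y = α * w x y / ∑_{y'} w x y'`. -/
noncomputable def pprMatrix {V : Type*} [Fintype V] (w : Matrix V V ℝ≥0∞) (α : ℝ≥0∞) :
    Matrix V V ℝ≥0∞ :=
  Matrix.of fun x y => α * w x y / ∑ y' : V, w x y'

/-! The Bellman–Ford iterates are the partial sums `∑_{k ≤ t} A ^ k` of the Neumann series of `A`,
so in `ℝ≥0∞` their supremum is the series `∑' k, A ^ k`, whose `k = 0` term is the identity. -/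

section BellmanFord

variable {V : Type*} [Fintype V] [DecidableEq V]

theorem bellmanFord_eq_sum_range_pow (A : Matrix V V ℝ≥0∞) (t : ℕ) :
    bellmanFord A t = ∑ k ∈ Finset.range (t + 1), A ^ k := by
  induction t with
  | zero => simp [bellmanFord]
  | succ t ih =>
    rw [bellmanFord, ih, Finset.sum_mul, Finset.sum_range_succ' (fun k => A ^ k) (t + 1)]
    simp only [← pow_succ, pow_zero]

theorem iSup_bellmanFord_apply (A : Matrix V V ℝ≥0∞) (i j : V) :
    ⨆ t, bellmanFord A t i j = ∑' k, (A ^ k) i j := by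
  rw [ENNReal.tsum_eq_iSup_nat' (Filter.tendsto_add_atTop_nat 1)]
  simp only [bellmanFord_eq_sum_range_pow, Matrix.sum_apply]

end BellmanFord

theorem bellmanFord_solves_ppr {V : Type*} [Fintype V] [DecidableEq V]
    (w : Matrix V V ℝ≥0∞) (α : ℝ≥0∞)
    (u v : V) :
    (⨆ t : ℕ, bellmanFord (pprMatrix w α) t u v) =
      (if u = v then 1 else 0) + ∑' t : ℕ, (pprMatrix w α ^ (t + 1)) u v := by
  rw [iSup_bellmanFord_apply, tsum_eq_zero_add' ENNReal.summable, pow_zero, Matrix.one_apply]
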